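/- There exist constants C > 0 depending only on K and bounds for ψ and its derivatives (but not on μ), and C_μ > 0 depending in addition on μ, such that whenever μ ≥ 1, λ ≥ 1, h > 0, and λh ≤ δT², one has for all t ∈ [0,T] and x ∈ ℝ: | A_h D_h( r² D_h²ρ · A_h D_h ρ )(t,x) + 3·s(t)³·μ⁴·e^{3μψ(x)}·(ψ'(x))⁴ | ≤ C·μ³·s(t)³·e^{3μψ(x)} + C_μ·s(t)² + C_μ·s(t)³·(s(t)h)², where D_h²ρ = D_h(D_h ρ), A_h D_h ρ = A_h(D_h ρ), and A_h D_h is applied in x to the function x ↦ r(t,x)²·D_h²ρ(t,x)·A_h D_h ρ(t,x). -/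

import Mathlib

/-- The translation `τ₊`/`τ₋` average operator `A_h u = (u(x+h/2)+u(x-h/2))/2`
(acting in the space variable). -/
noncomputable def Ah (h : ℝ) (u : ℝ → ℝ) : ℝ → ℝ :=
  fun x => (u (x + h / 2) + u (x - h / 2)) / 2

/-- The difference operator `D_h u = (u(x+h/2)-u(x-h/2))/h`
(acting in the space variable). -/
noncomputable def Dh (h : ℝ) (u : ℝ → ℝ) : ℝ → ℝ :=
  fun x => (u (x + h / 2) - u (x - h / 2)) / h

/-- The time weight `θ(t) = 1/((t+δT)(T+δT−t))`. -/
noncomputable def theta (T δ t : ℝ) : ℝ := 1 / ((t + δ * T) * (T + δ * T - t))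

/-- `s(t) = λ θ(t)`. -/
noncomputable def sF (lam T δ t : ℝ) : ℝ := lam * theta T δ t

/-- The Carleman weight `φ(x) = e^{μψ(x)} − e^{2μK}`. -/
noncomputable def phiW (μ K : ℝ) (ψ : ℝ → ℝ) (x : ℝ) : ℝ :=
  Real.exp (μ * ψ x) - Real.exp (2 * μ * K)

/-- `r(t,x) = e^{s(t)φ(x)}`. -/
noncomputable def rW (lam T δ μ K : ℝ) (ψ : ℝ → ℝ) (t x : ℝ) : ℝ :=
  Real.exp (sF lam T δ t * phiW μ K ψ x)

/-- `ρ(t,x) = e^{−s(t)φ(x)} = r(t,x)⁻¹`. -/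
noncomputable def rhoW (lam T δ μ K : ℝ) (ψ : ℝ → ℝ) (t x : ℝ) : ℝ :=
  Real.exp (-(sF lam T δ t) * phiW μ K ψ x)

open Real Set
open scoped ContDiff


/-- Mean value inequality on a convex set, with `HasDerivAt`. -/
lemma mvt_seg {f f' : ℝ → ℝ} {s : Set ℝ} (hs : Convex ℝ s)
    (hf : ∀ y, HasDerivAt f (f' y) y) {B : ℝ} (hB : ∀ y ∈ s, |f' y| ≤ B)
    {a b : ℝ} (ha : a ∈ s) (hb : b ∈ s) : |f b - f a| ≤ B * |b - a| := by
  have := hs.norm_image_sub_le_of_norm_hasDerivWithin_le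
    (f := f) (f' := f') (fun y hy => (hf y).hasDerivWithinAt)
    (fun y hy => by simpa using hB y hy) ha hb
  simpa [Real.norm_eq_abs] using this

/-- Global mean value inequality. -/
lemma mvt_glob {f f' : ℝ → ℝ} (hf : ∀ y, HasDerivAt f (f' y) y)
    {B : ℝ} (hB : ∀ y, |f' y| ≤ B) (a b : ℝ) : |f b - f a| ≤ B * |b - a| :=
  mvt_seg convex_univ hf (fun y _ => hB y) (mem_univ a) (mem_univ b)

noncomputable def gg (u : ℝ) : ℝ := Real.exp (2*u) - 2*Real.exp u
noncomputable def gg1 (u : ℝ) : ℝ := 2*Real.exp (2*u) - 2*Real.exp u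
noncomputable def gg2 (u : ℝ) : ℝ := 4*Real.exp (2*u) - 2*Real.exp u

noncomputable def qt (u : ℝ) : ℝ :=
  Real.exp (-(2*u)) - 2*Real.exp (-u) - Real.exp (2*u) + 2*Real.exp u + 2*u^3
noncomputable def qt1 (u : ℝ) : ℝ :=
  -2*Real.exp (-(2*u)) + 2*Real.exp (-u) - 2*Real.exp (2*u) + 2*Real.exp u + 6*u^2
noncomputable def qt2 (u : ℝ) : ℝ :=
  4*Real.exp (-(2*u)) - 2*Real.exp (-u) - 4*Real.exp (2*u) + 2*Real.exp u + 12*u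
noncomputable def qt3 (u : ℝ) : ℝ :=
  -8*Real.exp (-(2*u)) + 2*Real.exp (-u) - 8*Real.exp (2*u) + 2*Real.exp u + 12
noncomputable def qt4 (u : ℝ) : ℝ :=
  16*Real.exp (-(2*u)) - 2*Real.exp (-u) - 16*Real.exp (2*u) + 2*Real.exp u
noncomputable def qt5 (u : ℝ) : ℝ :=
  -32*Real.exp (-(2*u)) + 2*Real.exp (-u) - 32*Real.exp (2*u) + 2*Real.exp u

lemma hda_convert {f g : ℝ → ℝ} {a b x : ℝ} (h : HasDerivAt g b x) (hf : f = g) (hab : a = b) :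
    HasDerivAt f a x := hf ▸ hab ▸ h

lemma hasDerivAt_exp_two_mul (u : ℝ) :
    HasDerivAt (fun v : ℝ => Real.exp (2*v)) (2*Real.exp (2*u)) u := by
  have h := (Real.hasDerivAt_exp (2*u)).comp u ((hasDerivAt_id u).const_mul 2)
  refine hda_convert h rfl ?_
  ring

lemma hasDerivAt_exp_neg_two_mul (u : ℝ) :
    HasDerivAt (fun v : ℝ => Real.exp (-(2*v))) (-2*Real.exp (-(2*u))) u := by
  have h := (Real.hasDerivAt_exp (-(2*u))).comp u
    (((hasDerivAt_id u).const_mul 2).neg)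
  simpa [mul_comm, Function.comp_def] using h

lemma hasDerivAt_exp_neg (u : ℝ) :
    HasDerivAt (fun v : ℝ => Real.exp (-v)) (-Real.exp (-u)) u := by
  simpa [Function.comp_def] using (Real.hasDerivAt_exp (-u)).comp u ((hasDerivAt_id u).neg)

lemma hasDerivAt_gg (u : ℝ) : HasDerivAt gg (gg1 u) u := by
  unfold gg gg1
  exact hda_convert ((hasDerivAt_exp_two_mul u).sub ((Real.hasDerivAt_exp u).const_mul 2)) rfl rfl

lemma hasDerivAt_gg1 (u : ℝ) : HasDerivAt gg1 (gg2 u) u := by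
  unfold gg1 gg2
  have h1 := (hasDerivAt_exp_two_mul u).const_mul 2
  have h2 := (Real.hasDerivAt_exp u).const_mul 2
  refine hda_convert (h1.sub h2) rfl ?_; ring

lemma hasDerivAt_qt (u : ℝ) : HasDerivAt qt (qt1 u) u := by
  unfold qt qt1
  have h1 := hasDerivAt_exp_neg_two_mul u
  have h2 := (hasDerivAt_exp_neg u).const_mul 2
  have h3 := hasDerivAt_exp_two_mul u
  have h4 := Real.hasDerivAt_exp u
  have h5 : HasDerivAt (fun v : ℝ => 2*v^3) (6*u^2) u := by
    have := ((hasDerivAt_pow 3 u)).const_mul 2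
    refine hda_convert this rfl ?_; ring
  refine hda_convert ((((h1.sub h2).sub h3).add (h4.const_mul 2)).add h5) rfl ?_; ring

lemma hasDerivAt_qt1 (u : ℝ) : HasDerivAt qt1 (qt2 u) u := by
  unfold qt1 qt2
  have h1 := (hasDerivAt_exp_neg_two_mul u).const_mul 2
  have h2 := (hasDerivAt_exp_neg u).const_mul 2
  have h3 := (hasDerivAt_exp_two_mul u).const_mul 2
  have h4 := (Real.hasDerivAt_exp u).const_mul 2
  have h5 : HasDerivAt (fun v : ℝ => 6*v^2) (12*u) u := by
    have := ((hasDerivAt_pow 2 u)).const_mul 6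
    refine hda_convert this rfl ?_; ring
  refine hda_convert ((((h1.neg.add h2).sub h3).add h4).add h5) ?_ ?_
  · funext v; simp only [Pi.add_apply, Pi.sub_apply, Pi.neg_apply]; ring
  · ring

lemma hasDerivAt_qt2 (u : ℝ) : HasDerivAt qt2 (qt3 u) u := by
  unfold qt2 qt3
  have h1 := (hasDerivAt_exp_neg_two_mul u).const_mul 4
  have h2 := (hasDerivAt_exp_neg u).const_mul 2
  have h3 := (hasDerivAt_exp_two_mul u).const_mul 4
  have h4 := (Real.hasDerivAt_exp u).const_mul 2
  have h5 : HasDerivAt (fun v : ℝ => 12*v) (12:ℝ) u := by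
    simpa using (hasDerivAt_id u).const_mul (12:ℝ)
  refine hda_convert ((((h1.sub h2).sub h3).add h4).add h5) rfl ?_; ring

lemma hasDerivAt_qt3 (u : ℝ) : HasDerivAt qt3 (qt4 u) u := by
  unfold qt3 qt4
  have h1 := (hasDerivAt_exp_neg_two_mul u).const_mul 8
  have h2 := (hasDerivAt_exp_neg u).const_mul 2
  have h3 := (hasDerivAt_exp_two_mul u).const_mul 8
  have h4 := (Real.hasDerivAt_exp u).const_mul 2
  refine hda_convert ((((h1.neg.add h2).sub h3).add h4).add (hasDerivAt_const u (12:ℝ))) ?_ ?_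
  · funext v; simp only [Pi.add_apply, Pi.sub_apply, Pi.neg_apply]; ring
  · ring

lemma hasDerivAt_qt4 (u : ℝ) : HasDerivAt qt4 (qt5 u) u := by
  unfold qt4 qt5
  have h1 := (hasDerivAt_exp_neg_two_mul u).const_mul 16
  have h2 := (hasDerivAt_exp_neg u).const_mul 2
  have h3 := (hasDerivAt_exp_two_mul u).const_mul 16
  have h4 := (Real.hasDerivAt_exp u).const_mul 2
  refine hda_convert (((h1.sub h2).sub h3).add h4) rfl ?_; ring

lemma exp_le_E {B u : ℝ} (hB : 0 ≤ B) (hu : |u| ≤ B) :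
    Real.exp (-(2*u)) ≤ Real.exp (2*B) ∧ Real.exp (-u) ≤ Real.exp (2*B) ∧
    Real.exp (2*u) ≤ Real.exp (2*B) ∧ Real.exp u ≤ Real.exp (2*B) := by
  obtain ⟨h1, h2⟩ := abs_le.1 hu
  refine ⟨Real.exp_le_exp.2 (by linarith), Real.exp_le_exp.2 (by linarith),
    Real.exp_le_exp.2 (by linarith), Real.exp_le_exp.2 (by linarith)⟩

lemma qt5_bound {B u : ℝ} (hB : 0 ≤ B) (hu : |u| ≤ B) : |qt5 u| ≤ 68 * Real.exp (2*B) := by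
  obtain ⟨e1, e2, e3, e4⟩ := exp_le_E hB hu
  have p1 := Real.exp_pos (-(2*u)); have p2 := Real.exp_pos (-u)
  have p3 := Real.exp_pos (2*u); have p4 := Real.exp_pos u
  unfold qt5
  have : |(-32*Real.exp (-(2*u)) + 2*Real.exp (-u) - 32*Real.exp (2*u) + 2*Real.exp u)|
      ≤ 32*Real.exp (-(2*u)) + 2*Real.exp (-u) + 32*Real.exp (2*u) + 2*Real.exp u := by
    rw [abs_le]; constructor <;> nlinarith
  nlinarith

lemma gg2_bound {B u : ℝ} (hB : 0 ≤ B) (hu : |u| ≤ B) : |gg2 u| ≤ 6 * Real.exp (2*B) := by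
  obtain ⟨e1, e2, e3, e4⟩ := exp_le_E hB hu
  have p3 := Real.exp_pos (2*u); have p4 := Real.exp_pos u
  unfold gg2
  rw [abs_le]; constructor <;> nlinarith

/-- Chained smallness of `qt1` near `0`. -/
lemma qt1_bound {B r : ℝ} (hB : 0 ≤ B) (hr0 : 0 ≤ r) (hrB : r ≤ B) :
    ∀ u ∈ Icc (-r) r, |qt1 u| ≤ 68 * Real.exp (2*B) * r^4 := by
  set Q := 68 * Real.exp (2*B) with hQ
  have hQ0 : 0 ≤ Q := by positivity
  have hIcc : Convex ℝ (Icc (-r) r) := convex_Icc _ _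
  have h0 : (0:ℝ) ∈ Icc (-r) r := by constructor <;> linarith
  have habs : ∀ u ∈ Icc (-r) r, |u| ≤ r := fun u hu => abs_le.2 ⟨hu.1, hu.2⟩
  have hq5 : ∀ u ∈ Icc (-r) r, |qt5 u| ≤ Q := fun u hu =>
    qt5_bound hB ((habs u hu).trans hrB)
  have hq4 : ∀ u ∈ Icc (-r) r, |qt4 u| ≤ Q * r := by
    intro u hu
    have := mvt_seg hIcc hasDerivAt_qt4 hq5 h0 hu
    have h40 : qt4 0 = 0 := by unfold qt4; norm_num
    rw [h40, sub_zero] at this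
    calc |qt4 u| ≤ Q * |u - 0| := this
    _ ≤ Q * r := by rw [sub_zero]; exact mul_le_mul_of_nonneg_left (habs u hu) hQ0
  have hq3 : ∀ u ∈ Icc (-r) r, |qt3 u| ≤ Q * r^2 := by
    intro u hu
    have := mvt_seg hIcc hasDerivAt_qt3 hq4 h0 hu
    have h30 : qt3 0 = 0 := by unfold qt3; norm_num
    rw [h30, sub_zero, sub_zero] at this
    calc |qt3 u| ≤ Q * r * |u| := this
    _ ≤ Q * r * r := mul_le_mul_of_nonneg_left (habs u hu) (by positivity)
    _ = Q * r^2 := by ring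
  have hq2 : ∀ u ∈ Icc (-r) r, |qt2 u| ≤ Q * r^3 := by
    intro u hu
    have := mvt_seg hIcc hasDerivAt_qt2 hq3 h0 hu
    have h20 : qt2 0 = 0 := by unfold qt2; norm_num
    rw [h20, sub_zero, sub_zero] at this
    calc |qt2 u| ≤ Q * r^2 * |u| := this
    _ ≤ Q * r^2 * r := mul_le_mul_of_nonneg_left (habs u hu) (by positivity)
    _ = Q * r^3 := by ring
  intro u hu
  have := mvt_seg hIcc hasDerivAt_qt1 hq2 h0 hu
  have h10 : qt1 0 = 0 := by unfold qt1; norm_num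
  rw [h10, sub_zero, sub_zero] at this
  calc |qt1 u| ≤ Q * r^3 * |u| := this
  _ ≤ Q * r^3 * r := mul_le_mul_of_nonneg_left (habs u hu) (by positivity)
  _ = Q * r^4 := by ring

/-- `gg1` is small near `0`. -/
lemma gg1_bound {B r : ℝ} (hB : 0 ≤ B) (hr0 : 0 ≤ r) (hrB : r ≤ B) :
    ∀ u ∈ Icc (-r) r, |gg1 u| ≤ 6 * Real.exp (2*B) * r := by
  intro u hu
  have habs : |u| ≤ r := abs_le.2 ⟨hu.1, hu.2⟩
  have h0 : (0:ℝ) ∈ Icc (-r) r := by constructor <;> linarith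
  have := mvt_seg (convex_Icc _ _) hasDerivAt_gg1
    (B := 6 * Real.exp (2*B)) (fun v hv => gg2_bound hB ((abs_le.2 ⟨hv.1, hv.2⟩).trans hrB)) h0 hu
  have hg0 : gg1 0 = 0 := by unfold gg1; simp
  rw [hg0, sub_zero, sub_zero] at this
  calc |gg1 u| ≤ 6 * Real.exp (2*B) * |u| := this
  _ ≤ 6 * Real.exp (2*B) * r := mul_le_mul_of_nonneg_left habs (by positivity)

lemma hasDerivAt_shift {f f' : ℝ → ℝ} (hf : ∀ y, HasDerivAt f (f' y) y) (c y : ℝ) :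
    HasDerivAt (fun z => f (z + c)) (f' (y + c)) y := by
  have := (hf (y + c)).comp y ((hasDerivAt_id y).add_const c)
  simpa [Function.comp_def] using this

lemma abs_quad_bound {a b M : ℝ} (ha : |a| ≤ M) (hb : |b| ≤ M) :
    |a^2 + a*b + b^2| ≤ 3*M^2 := by
  have hM : 0 ≤ M := (abs_nonneg a).trans ha
  have h1 : |a^2 + a*b + b^2| ≤ |a|^2 + |a| * |b| + |b|^2 := by
    calc |a^2 + a*b + b^2| ≤ |a^2 + a*b| + |b^2| := abs_add_le _ _
    _ ≤ |a^2| + |a*b| + |b^2| := by linarith [abs_add_le (a^2) (a*b)]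
    _ = |a|^2 + |a| * |b| + |b|^2 := by rw [abs_mul, abs_pow, abs_pow]
  have h2 : |a|^2 ≤ M^2 := by nlinarith [abs_nonneg a]
  have h3 : |b|^2 ≤ M^2 := by nlinarith [abs_nonneg b]
  have h4 : |a| * |b| ≤ M^2 := by nlinarith [abs_nonneg a, abs_nonneg b]
  linarith

lemma core (φ φ' φ'' φ''' : ℝ → ℝ)
    (hd1 : ∀ y, HasDerivAt φ (φ' y) y) (hd2 : ∀ y, HasDerivAt φ' (φ'' y) y)
    (hd3 : ∀ y, HasDerivAt φ'' (φ''' y) y)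
    (B₁ B₂ B₃ : ℝ) (hB1 : ∀ y, |φ' y| ≤ B₁) (hB2 : ∀ y, |φ'' y| ≤ B₂)
    (hB3 : ∀ y, |φ''' y| ≤ B₃)
    (s h : ℝ) (hs : 0 < s) (hh : 0 < h) (hsh : s * h ≤ 1) (x : ℝ) :
    |(gg (-(s * (φ (x+2*h) - φ (x+h)))) - gg (s * (φ (x+h) - φ x))
      - gg (-(s * (φ x - φ (x-h)))) + gg (s * (φ (x-h) - φ (x-2*h)))) / (4*h^4)
      + 3 * s^3 * φ' x ^ 2 * φ'' x|
    ≤ (34 * Real.exp (2*B₁) * B₁^4 * B₂ + 3 * Real.exp (2*B₁) * (B₂^2 + B₁*B₃)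
        + 9 * B₁ * (B₁*B₃ + B₂^2)) * (s^2 + s^3 * (s*h)^2) := by
  have hB10 : 0 ≤ B₁ := (abs_nonneg _).trans (hB1 0)
  have hB20 : 0 ≤ B₂ := (abs_nonneg _).trans (hB2 0)
  have hB30 : 0 ≤ B₃ := (abs_nonneg _).trans (hB3 0)
  have hsh0 : 0 ≤ s * h := le_of_lt (mul_pos hs hh)
  set E := Real.exp (2*B₁) with hE
  have hE1 : 1 ≤ E := Real.one_le_exp (by linarith)
  have hE0 : 0 < E := lt_of_lt_of_le one_pos hE1
  have hE0' : 0 ≤ E := le_of_lt hE0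
  -- the discrete gradient functions
  set m : ℝ → ℝ := fun y => s * (φ (y+h) - φ y) with hm
  set m' : ℝ → ℝ := fun y => s * (φ' (y+h) - φ' y) with hm'
  set m'' : ℝ → ℝ := fun y => s * (φ'' (y+h) - φ'' y) with hm''
  have hdm : ∀ y, HasDerivAt m (m' y) y := fun y =>
    ((hasDerivAt_shift hd1 h y).sub (hd1 y)).const_mul s
  have hdm' : ∀ y, HasDerivAt m' (m'' y) y := fun y =>
    ((hasDerivAt_shift hd2 h y).sub (hd2 y)).const_mul s
  -- global Lipschitz bounds
  have lip1 : ∀ y z : ℝ, |φ z - φ y| ≤ B₁ * |z - y| := fun y z => mvt_glob hd1 hB1 y z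
  have lip2 : ∀ y z : ℝ, |φ' z - φ' y| ≤ B₂ * |z - y| := fun y z => mvt_glob hd2 hB2 y z
  have lip3 : ∀ y z : ℝ, |φ'' z - φ'' y| ≤ B₃ * |z - y| := fun y z => mvt_glob hd3 hB3 y z
  have hhabs : |h| = h := abs_of_pos hh
  have hsabs : |s| = s := abs_of_pos hs
  have hmb : ∀ y, |m y| ≤ B₁ * (s*h) := by
    intro y
    have := lip1 y (y+h)
    rw [show y + h - y = h by ring, hhabs] at this
    calc |m y| = s * |φ (y+h) - φ y| := by rw [hm]; simp only; rw [abs_mul, hsabs]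
    _ ≤ s * (B₁ * h) := mul_le_mul_of_nonneg_left this (le_of_lt hs)
    _ = B₁ * (s*h) := by ring
  have hm'b : ∀ y, |m' y| ≤ B₂ * (s*h) := by
    intro y
    have := lip2 y (y+h)
    rw [show y + h - y = h by ring, hhabs] at this
    calc |m' y| = s * |φ' (y+h) - φ' y| := by rw [hm']; simp only; rw [abs_mul, hsabs]
    _ ≤ s * (B₂ * h) := mul_le_mul_of_nonneg_left this (le_of_lt hs)
    _ = B₂ * (s*h) := by ring
  have hm''b : ∀ y, |m'' y| ≤ B₃ * (s*h) := by
    intro y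
    have := lip3 y (y+h)
    rw [show y + h - y = h by ring, hhabs] at this
    calc |m'' y| = s * |φ'' (y+h) - φ'' y| := by rw [hm'']; simp only; rw [abs_mul, hsabs]
    _ ≤ s * (B₃ * h) := mul_le_mul_of_nonneg_left this (le_of_lt hs)
    _ = B₃ * (s*h) := by ring
  set r := B₁ * (s*h) with hr
  have hr0 : 0 ≤ r := mul_nonneg hB10 hsh0
  have hrB : r ≤ B₁ := by
    calc r = B₁ * (s*h) := hr
    _ ≤ B₁ * 1 := mul_le_mul_of_nonneg_left hsh hB10
    _ = B₁ := mul_one _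
  have hmem : ∀ y, m y ∈ Icc (-r) r := fun y => abs_le.1 (hmb y)
  -- argument normalizations
  have hma : m (x+h) = s * (φ (x+2*h) - φ (x+h)) := by
    simp only [hm]; rw [show x+h+h = x+2*h by ring]
  have hmc : m x = s * (φ (x+h) - φ x) := rfl
  have hmbx : m (x-h) = s * (φ x - φ (x-h)) := by
    simp only [hm]; rw [show x-h+h = x by ring]
  have hmd : m (x-2*h) = s * (φ (x-h) - φ (x-2*h)) := by
    simp only [hm]; rw [show x-2*h+h = x-h by ring]
  rw [← hma, ← hmc, ← hmbx, ← hmd]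
  -- abbreviations
  set a := φ (x+2*h) - φ (x+h) with hadef
  set b := φ x - φ (x-h) with hbdef
  have hggneg : ∀ u : ℝ, gg (-u) = qt u - 2*u^3 + gg u := by
    intro u; unfold gg qt
    rw [show (2:ℝ)*(-u) = -(2*u) by ring]; ring
  set T1 := qt (m (x+h)) - qt (m (x-h)) with hT1
  set T2 := -2*((m (x+h))^3 - (m (x-h))^3) with hT2
  set T3 := (gg (m (x+h)) - gg (m x)) - (gg (m (x-h)) - gg (m (x-2*h))) with hT3
  have hN : gg (-(m (x+h))) - gg (m x) - gg (-(m (x-h))) + gg (m (x-2*h))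
      = T1 + T2 + T3 := by
    rw [hT1, hT2, hT3, hggneg (m (x+h)), hggneg (m (x-h))]
    ring
  rw [hN]
  have h4 : (0:ℝ) < 4*h^4 := by positivity
  -- Estimate T1
  have hT1b : |T1| ≤ 136 * E * B₁^4 * B₂ * (s^5 * h^6) := by
    rw [hT1]
    have hq := qt1_bound hB10 hr0 hrB
    have key := mvt_seg (convex_Icc (-r) r) hasDerivAt_qt
      (B := 68 * E * r^4) (fun u hu => hq u hu) (hmem (x-h)) (hmem (x+h))
    have hmm : |m (x+h) - m (x-h)| ≤ B₂ * (s*h) * (2*h) := by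
      have := mvt_glob hdm hm'b (x-h) (x+h)
      rw [show x + h - (x - h) = 2*h by ring] at this
      calc |m (x+h) - m (x-h)| ≤ B₂ * (s*h) * |2*h| := this
      _ = B₂ * (s*h) * (2*h) := by rw [abs_of_pos (by linarith)]
    calc |qt (m (x+h)) - qt (m (x-h))| ≤ 68 * E * r^4 * |m (x+h) - m (x-h)| := key
    _ ≤ 68 * E * r^4 * (B₂ * (s*h) * (2*h)) := by
        apply mul_le_mul_of_nonneg_left hmm; positivity
    _ = 136 * E * B₁^4 * B₂ * (s^5 * h^6) := by rw [hr]; ring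
  -- Estimate T3
  set G : ℝ → ℝ := fun y => gg (m (y+h)) - gg (m y) with hG
  set G' : ℝ → ℝ := fun y => gg1 (m (y+h)) * m' (y+h) - gg1 (m y) * m' y with hG'
  have hdG : ∀ y, HasDerivAt G (G' y) y := by
    intro y
    have h1 : HasDerivAt (fun z => gg (m (z+h))) (gg1 (m (y+h)) * m' (y+h)) y := by
      have := (hasDerivAt_gg (m (y+h))).comp y (hasDerivAt_shift hdm h y)
      simpa [mul_comm, Function.comp_def] using this
    have h2 : HasDerivAt (fun z => gg (m z)) (gg1 (m y) * m' y) y := by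
      have := (hasDerivAt_gg (m y)).comp y (hdm y)
      simpa [mul_comm, Function.comp_def] using this
    exact h1.sub h2
  have hG'b : ∀ y, |G' y| ≤ 6 * E * (B₂^2 + B₁*B₃) * (s^2 * h^3) := by
    intro y
    have e1 : |gg1 (m (y+h)) - gg1 (m y)| ≤ 6 * E * (B₂ * (s*h) * h) := by
      have key := mvt_seg (convex_Icc (-r) r) hasDerivAt_gg1
        (B := 6 * E) (fun u hu => gg2_bound hB10 ((abs_le.2 ⟨hu.1, hu.2⟩).trans hrB))
        (hmem y) (hmem (y+h))
      have hmm : |m (y+h) - m y| ≤ B₂ * (s*h) * h := by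
        have := mvt_glob hdm hm'b y (y+h)
        rw [show y + h - y = h by ring, hhabs] at this
        linarith
      calc |gg1 (m (y+h)) - gg1 (m y)| ≤ 6*E*|m (y+h) - m y| := key
      _ ≤ 6*E*(B₂ * (s*h) * h) := by apply mul_le_mul_of_nonneg_left hmm; positivity
    have e2 : |gg1 (m y)| ≤ 6 * E * r := gg1_bound hB10 hr0 hrB _ (hmem y)
    have e3 : |m' (y+h) - m' y| ≤ B₃ * (s*h) * h := by
      have := mvt_glob hdm' hm''b y (y+h)
      rw [show y + h - y = h by ring, hhabs] at this
      linarith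
    have e4 : |m' (y+h)| ≤ B₂ * (s*h) := hm'b (y+h)
    have split : G' y = (gg1 (m (y+h)) - gg1 (m y)) * m' (y+h)
        + gg1 (m y) * (m' (y+h) - m' y) := by rw [hG']; ring
    calc |G' y| ≤ |(gg1 (m (y+h)) - gg1 (m y)) * m' (y+h)|
          + |gg1 (m y) * (m' (y+h) - m' y)| := by rw [split]; exact abs_add_le _ _
    _ = |gg1 (m (y+h)) - gg1 (m y)| * |m' (y+h)| + |gg1 (m y)| * |m' (y+h) - m' y| := by
        rw [abs_mul (gg1 (m (y+h)) - gg1 (m y)) (m' (y+h)),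
          abs_mul (gg1 (m y)) (m' (y+h) - m' y)]
    _ ≤ 6 * E * (B₂ * (s*h) * h) * (B₂ * (s*h)) + 6 * E * r * (B₃ * (s*h) * h) := by
        apply add_le_add
        · exact mul_le_mul e1 e4 (abs_nonneg _) (by positivity)
        · exact mul_le_mul e2 e3 (abs_nonneg _) (by positivity)
    _ = 6 * E * (B₂^2 + B₁*B₃) * (s^2 * h^3) := by rw [hr]; ring
  have hT3b : |T3| ≤ 12 * E * (B₂^2 + B₁*B₃) * (s^2 * h^4) := by
    have hGx : G x = gg (m (x+h)) - gg (m x) := rfl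
    have hGx2 : G (x-2*h) = gg (m (x-h)) - gg (m (x-2*h)) := by
      simp only [hG]; rw [show x-2*h+h = x-h by ring]
    have key := mvt_glob hdG hG'b (x-2*h) x
    rw [show x - (x-2*h) = 2*h by ring] at key
    have hT3e : |T3| = |G x - G (x-2*h)| := by rw [hT3, hGx, hGx2]
    rw [hT3e]
    calc |G x - G (x-2*h)| ≤ 6 * E * (B₂^2 + B₁*B₃) * (s^2*h^3) * |2*h| := key
    _ = 12 * E * (B₂^2 + B₁*B₃) * (s^2 * h^4) := by
        rw [abs_of_pos (by linarith : (0:ℝ) < 2*h)]; ring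
  -- Main term
  have hmain : |T2/(4*h^4) + 3 * s^3 * φ' x ^ 2 * φ'' x|
      ≤ 9 * B₁ * (B₁*B₃ + B₂^2) * (s^3 * h) := by
    have ha' : |a| ≤ B₁ * h := by
      have := lip1 (x+h) (x+2*h)
      rw [show x+2*h - (x+h) = h by ring, hhabs] at this
      exact this
    have hb' : |b| ≤ B₁ * h := by
      have := lip1 (x-h) x
      rw [show x - (x-h) = h by ring, hhabs] at this
      exact this
    set c := h * φ' x with hcdef
    have hc' : |c| ≤ B₁ * h := by
      rw [hcdef, abs_mul, hhabs]
      calc h * |φ' x| ≤ h * B₁ := mul_le_mul_of_nonneg_left (hB1 x) (le_of_lt hh)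
      _ = B₁ * h := by ring
    have hac : |a - c| ≤ 2 * B₂ * h^2 := by
      set F : ℝ → ℝ := fun u => φ u - u * φ' x with hF
      have hdF : ∀ u, HasDerivAt F (φ' u - φ' x) u := fun u => by
        exact hda_convert ((hd1 u).sub ((hasDerivAt_id u).mul_const (φ' x))) rfl (by ring)
      have hFb : ∀ u ∈ Icc (x+h) (x+2*h), |φ' u - φ' x| ≤ B₂ * (2*h) := by
        intro u hu
        calc |φ' u - φ' x| ≤ B₂ * |u - x| := lip2 x u
        _ ≤ B₂ * (2*h) := by
            apply mul_le_mul_of_nonneg_left _ hB20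
            rw [abs_le]; constructor
            · linarith [hu.1]
            · linarith [hu.2]
      have key := mvt_seg (convex_Icc (x+h) (x+2*h)) hdF hFb
        (left_mem_Icc.2 (by linarith)) (right_mem_Icc.2 (by linarith))
      rw [show x+2*h - (x+h) = h by ring, hhabs] at key
      have hFe : F (x+2*h) - F (x+h) = a - c := by
        simp only [hF]; rw [hadef, hcdef]; ring
      rw [hFe] at key
      calc |a - c| ≤ B₂ * (2*h) * h := key
      _ = 2 * B₂ * h^2 := by ring
    have hbc : |b - c| ≤ B₂ * h^2 := by
      set F : ℝ → ℝ := fun u => φ u - u * φ' x with hF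
      have hdF : ∀ u, HasDerivAt F (φ' u - φ' x) u := fun u => by
        exact hda_convert ((hd1 u).sub ((hasDerivAt_id u).mul_const (φ' x))) rfl (by ring)
      have hFb : ∀ u ∈ Icc (x-h) x, |φ' u - φ' x| ≤ B₂ * h := by
        intro u hu
        calc |φ' u - φ' x| ≤ B₂ * |u - x| := lip2 x u
        _ ≤ B₂ * h := by
            apply mul_le_mul_of_nonneg_left _ hB20
            rw [abs_le]; constructor
            · linarith [hu.1]
            · linarith [hu.2]
      have key := mvt_seg (convex_Icc (x-h) x) hdF hFb
        (left_mem_Icc.2 (by linarith)) (right_mem_Icc.2 (by linarith))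
      rw [show x - (x-h) = h by ring, hhabs] at key
      have hFe : F x - F (x-h) = b - c := by
        simp only [hF]; rw [hbdef, hcdef]; ring
      rw [hFe] at key
      calc |b - c| ≤ B₂ * h * h := key
      _ = B₂ * h^2 := by ring
    have habb : |a - b - 2*h^2*φ'' x| ≤ 4 * B₃ * h^3 := by
      set V : ℝ → ℝ := fun u => φ (u+h) - φ u - u * (h * φ'' x) with hV
      have hdV : ∀ u, HasDerivAt V (φ' (u+h) - φ' u - h * φ'' x) u := fun u => by
        exact hda_convert (((hasDerivAt_shift hd1 h u).sub (hd1 u)).sub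
          ((hasDerivAt_id u).mul_const (h * φ'' x))) rfl (by ring)
      have hVb : ∀ u ∈ Icc (x-h) (x+h), |φ' (u+h) - φ' u - h * φ'' x| ≤ 2 * B₃ * h^2 := by
        intro u hu
        set F2 : ℝ → ℝ := fun v => φ' v - v * φ'' x with hF2
        have hdF2 : ∀ v, HasDerivAt F2 (φ'' v - φ'' x) v := fun v => by
          exact hda_convert ((hd2 v).sub ((hasDerivAt_id v).mul_const (φ'' x))) rfl (by ring)
        have hF2b : ∀ v ∈ Icc u (u+h), |φ'' v - φ'' x| ≤ B₃ * (2*h) := by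
          intro v hv
          calc |φ'' v - φ'' x| ≤ B₃ * |v - x| := lip3 x v
          _ ≤ B₃ * (2*h) := by
              apply mul_le_mul_of_nonneg_left _ hB30
              rw [abs_le]; constructor
              · linarith [hv.1, hu.1]
              · linarith [hv.2, hu.2]
        have key := mvt_seg (convex_Icc u (u+h)) hdF2 hF2b
          (left_mem_Icc.2 (by linarith)) (right_mem_Icc.2 (by linarith))
        rw [show u + h - u = h by ring, hhabs] at key
        have hFe : F2 (u+h) - F2 u = φ' (u+h) - φ' u - h * φ'' x := by
          simp only [hF2]; ring
        rw [hFe] at key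
        calc |φ' (u+h) - φ' u - h * φ'' x| ≤ B₃ * (2*h) * h := key
        _ = 2 * B₃ * h^2 := by ring
      have key := mvt_seg (convex_Icc (x-h) (x+h)) hdV hVb
        (left_mem_Icc.2 (by linarith)) (right_mem_Icc.2 (by linarith))
      rw [show x + h - (x-h) = 2*h by ring, abs_of_pos (by linarith : (0:ℝ) < 2*h)] at key
      have hVe : V (x+h) - V (x-h) = a - b - 2*h^2*φ'' x := by
        simp only [hV]; rw [hadef, hbdef]
        rw [show x+h+h = x+2*h by ring, show x-h+h = x by ring]; ring
      rw [hVe] at key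
      calc |a - b - 2*h^2*φ'' x| ≤ 2 * B₃ * h^2 * (2*h) := key
      _ = 4 * B₃ * h^3 := by ring
    have hquad : |a^2 + a*b + b^2| ≤ 3 * (B₁*h)^2 := abs_quad_bound ha' hb'
    have hquad2 : |a^2 + a*b + b^2 - 3*c^2| ≤ 9 * B₁ * B₂ * h^3 := by
      have e1 : |a^2 - c^2| ≤ 4 * B₁ * B₂ * h^3 := by
        rw [show a^2 - c^2 = (a-c)*(a+c) by ring, abs_mul]
        have h1 : |a + c| ≤ 2 * (B₁*h) := by
          calc |a + c| ≤ |a| + |c| := abs_add_le _ _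
          _ ≤ 2 * (B₁*h) := by linarith
        calc |a-c| * |a+c| ≤ (2*B₂*h^2) * (2*(B₁*h)) :=
          mul_le_mul hac h1 (abs_nonneg _) (by positivity)
        _ = 4 * B₁ * B₂ * h^3 := by ring
      have e2 : |a*b - c^2| ≤ 3 * B₁ * B₂ * h^3 := by
        rw [show a*b - c^2 = a*(b-c) + c*(a-c) by ring]
        calc |a*(b-c) + c*(a-c)| ≤ |a*(b-c)| + |c*(a-c)| := abs_add_le _ _
        _ = |a| * |b-c| + |c| * |a-c| := by rw [abs_mul, abs_mul]
        _ ≤ (B₁*h)*(B₂*h^2) + (B₁*h)*(2*B₂*h^2) := by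
            apply add_le_add
            · exact mul_le_mul ha' hbc (abs_nonneg _) (by positivity)
            · exact mul_le_mul hc' hac (abs_nonneg _) (by positivity)
        _ = 3 * B₁ * B₂ * h^3 := by ring
      have e3 : |b^2 - c^2| ≤ 2 * B₁ * B₂ * h^3 := by
        rw [show b^2 - c^2 = (b-c)*(b+c) by ring, abs_mul]
        have h1 : |b + c| ≤ 2 * (B₁*h) := by
          calc |b + c| ≤ |b| + |c| := abs_add_le _ _
          _ ≤ 2 * (B₁*h) := by linarith
        calc |b-c| * |b+c| ≤ (B₂*h^2) * (2*(B₁*h)) :=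
          mul_le_mul hbc h1 (abs_nonneg _) (by positivity)
        _ = 2 * B₁ * B₂ * h^3 := by ring
      calc |a^2 + a*b + b^2 - 3*c^2|
          = |(a^2 - c^2) + (a*b - c^2) + (b^2 - c^2)| := by
            rw [show a^2 + a*b + b^2 - 3*c^2
              = (a^2 - c^2) + (a*b - c^2) + (b^2 - c^2) by ring]
      _ ≤ |(a^2 - c^2) + (a*b - c^2)| + |b^2 - c^2| := abs_add_le _ _
      _ ≤ |a^2 - c^2| + |a*b - c^2| + |b^2 - c^2| := by
          linarith [abs_add_le (a^2 - c^2) (a*b - c^2)]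
      _ ≤ 9 * B₁ * B₂ * h^3 := by linarith
    have hcube : |a^3 - b^3 - 6*h^4*(φ' x^2 * φ'' x)| ≤ 18 * B₁ * (B₁*B₃ + B₂^2) * h^5 := by
      have iden : a^3 - b^3 - 6*h^4*(φ' x^2 * φ'' x)
          = (a - b - 2*h^2*φ'' x) * (a^2+a*b+b^2)
            + (2*h^2*φ'' x) * (a^2+a*b+b^2 - 3*c^2) := by
        rw [hcdef]; ring
      rw [iden]
      have hphi2 : |2*h^2*φ'' x| ≤ 2*h^2*B₂ := by
        rw [abs_mul, abs_of_pos (by positivity : (0:ℝ) < 2*h^2)]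
        exact mul_le_mul_of_nonneg_left (hB2 x) (by positivity)
      calc |(a - b - 2*h^2*φ'' x) * (a^2+a*b+b^2)
            + (2*h^2*φ'' x) * (a^2+a*b+b^2 - 3*c^2)|
          ≤ |a - b - 2*h^2*φ'' x| * |a^2+a*b+b^2|
            + |2*h^2*φ'' x| * |a^2+a*b+b^2 - 3*c^2| := by
            refine (abs_add_le _ _).trans ?_
            rw [abs_mul, abs_mul]
      _ ≤ (4*B₃*h^3) * (3*(B₁*h)^2) + (2*h^2*B₂) * (9*B₁*B₂*h^3) := by
          apply add_le_add
          · exact mul_le_mul habb hquad (abs_nonneg _) (by positivity)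
          · exact mul_le_mul hphi2 hquad2 (abs_nonneg _) (by positivity)
      _ = (12*B₁^2*B₃ + 18*B₁*B₂^2) * h^5 := by ring
      _ ≤ 18 * B₁ * (B₁*B₃ + B₂^2) * h^5 := by
          have h0 : 0 ≤ B₁^2*B₃*h^5 := by positivity
          linarith
    have hT2eq : T2/(4*h^4) + 3 * s^3 * φ' x ^ 2 * φ'' x
        = -(s^3/(2*h^4)) * (a^3 - b^3 - 6*h^4*(φ' x^2 * φ'' x)) := by
      rw [hT2, hma, hmbx]
      field_simp
      ring
    rw [hT2eq, abs_mul, abs_neg]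
    have habs2 : |s^3/(2*h^4)| = s^3/(2*h^4) := abs_of_pos (by positivity)
    rw [habs2]
    calc s^3/(2*h^4) * |a^3 - b^3 - 6*h^4*(φ' x^2 * φ'' x)|
        ≤ s^3/(2*h^4) * (18 * B₁ * (B₁*B₃ + B₂^2) * h^5) :=
        mul_le_mul_of_nonneg_left hcube (by positivity)
    _ = 9 * B₁ * (B₁*B₃ + B₂^2) * (s^3 * h) := by field_simp; ring
  -- Assemble
  have split : (T1 + T2 + T3)/(4*h^4) + 3 * s^3 * φ' x ^ 2 * φ'' x
      = T1/(4*h^4) + (T2/(4*h^4) + 3 * s^3 * φ' x ^ 2 * φ'' x) + T3/(4*h^4) := by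
    field_simp; ring
  rw [split]
  have b1 : |T1/(4*h^4)| ≤ 34 * E * B₁^4 * B₂ * (s^3 * (s*h)^2) := by
    rw [abs_div, abs_of_pos h4, div_le_iff₀ h4]
    calc |T1| ≤ 136 * E * B₁^4 * B₂ * (s^5 * h^6) := hT1b
    _ = 34 * E * B₁^4 * B₂ * (s^3 * (s*h)^2) * (4*h^4) := by ring
  have b3 : |T3/(4*h^4)| ≤ 3 * E * (B₂^2 + B₁*B₃) * s^2 := by
    rw [abs_div, abs_of_pos h4, div_le_iff₀ h4]
    calc |T3| ≤ 12 * E * (B₂^2 + B₁*B₃) * (s^2 * h^4) := hT3b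
    _ = 3 * E * (B₂^2 + B₁*B₃) * s^2 * (4*h^4) := by ring
  have b2 : |T2/(4*h^4) + 3 * s^3 * φ' x ^ 2 * φ'' x|
      ≤ 9 * B₁ * (B₁*B₃ + B₂^2) * s^2 := by
    refine hmain.trans ?_
    rw [show s^3 * h = s^2 * (s*h) by ring]
    have h1 : s^2 * (s*h) ≤ s^2 * 1 := mul_le_mul_of_nonneg_left hsh (by positivity)
    rw [mul_one] at h1
    apply mul_le_mul_of_nonneg_left _ (by positivity)
    linarith
  have tri : |T1/(4*h^4) + (T2/(4*h^4) + 3 * s^3 * φ' x ^ 2 * φ'' x) + T3/(4*h^4)|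
      ≤ |T1/(4*h^4)| + |T2/(4*h^4) + 3 * s^3 * φ' x ^ 2 * φ'' x| + |T3/(4*h^4)| := by
    refine (abs_add_le _ _).trans ?_
    linarith [abs_add_le (T1/(4*h^4)) (T2/(4*h^4) + 3 * s^3 * φ' x ^ 2 * φ'' x)]
  refine tri.trans ?_
  have hX : 0 ≤ s^3 * (s*h)^2 := by positivity
  have hs2 : 0 ≤ s^2 := sq_nonneg s
  have c1 : 0 ≤ 34 * E * B₁^4 * B₂ * s^2 :=
    mul_nonneg (by positivity) hs2
  have c2 : 0 ≤ 3 * E * (B₂^2 + B₁*B₃) * (s^3 * (s*h)^2) :=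
    mul_nonneg (by positivity) hX
  have c3 : 0 ≤ 9 * B₁ * (B₁*B₃ + B₂^2) * (s^3 * (s*h)^2) :=
    mul_nonneg (by positivity) hX
  linarith [b1, b2, b3, c1, c2, c3]

lemma AhDh_apply (h : ℝ) (u : ℝ → ℝ) (x : ℝ) :
    Ah h (Dh h u) x = (u (x + h) - u (x - h)) / (2 * h) := by
  unfold Ah Dh
  rw [show x + h/2 + h/2 = x + h by ring, show x + h/2 - h/2 = x by ring,
    show x - h/2 + h/2 = x by ring, show x - h/2 - h/2 = x - h by ring]
  ring

lemma DhDh_apply (h : ℝ) (u : ℝ → ℝ) (x : ℝ) :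
    Dh h (Dh h u) x = (u (x + h) - 2 * u x + u (x - h)) / h^2 := by
  unfold Dh
  rw [show x + h/2 + h/2 = x + h by ring, show x + h/2 - h/2 = x by ring,
    show x - h/2 + h/2 = x by ring, show x - h/2 - h/2 = x - h by ring]
  ring

lemma gg_exp (t : ℝ) : gg t = Real.exp t ^ 2 - 2 * Real.exp t := by
  unfold gg
  rw [show 2*t = t + t by ring, Real.exp_add]
  ring

lemma op_identity (s : ℝ) (φ : ℝ → ℝ) (h x : ℝ) (hh : h ≠ 0) :
    Ah h (Dh h (fun y => Real.exp (s * φ y) ^ 2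
        * Dh h (Dh h (fun z => Real.exp (-(s * φ z)))) y
        * Ah h (Dh h (fun z => Real.exp (-(s * φ z)))) y)) x
    = (gg (-(s * (φ (x+2*h) - φ (x+h)))) - gg (s * (φ (x+h) - φ x))
      - gg (-(s * (φ x - φ (x-h)))) + gg (s * (φ (x-h) - φ (x-2*h)))) / (4*h^4) := by
  rw [AhDh_apply]
  beta_reduce
  rw [DhDh_apply h _ (x+h), AhDh_apply h _ (x+h), DhDh_apply h _ (x-h), AhDh_apply h _ (x-h)]
  beta_reduce
  rw [show x+h+h = x+2*h by ring, show x+h-h = x by ring,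
    show x-h+h = x by ring, show x-h-h = x-2*h by ring]
  set A := Real.exp (-(s * φ (x+2*h))) with hA
  set B := Real.exp (-(s * φ (x+h))) with hB
  set C := Real.exp (-(s * φ x)) with hC
  set D := Real.exp (-(s * φ (x-h))) with hD
  set F := Real.exp (-(s * φ (x-2*h))) with hF
  have hBne : B ≠ 0 := by rw [hB]; exact Real.exp_ne_zero _
  have hDne : D ≠ 0 := by rw [hD]; exact Real.exp_ne_zero _
  have hrB : Real.exp (s * φ (x+h)) = B⁻¹ := by
    rw [hB, ← Real.exp_neg, neg_neg]
  have hrD : Real.exp (s * φ (x-h)) = D⁻¹ := by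
    rw [hD, ← Real.exp_neg, neg_neg]
  have e1 : Real.exp (-(s * (φ (x+2*h) - φ (x+h)))) = A / B := by
    rw [hA, hB, ← Real.exp_sub]; congr 1; ring
  have e2 : Real.exp (s * (φ (x+h) - φ x)) = C / B := by
    rw [hC, hB, ← Real.exp_sub]; congr 1; ring
  have e3 : Real.exp (-(s * (φ x - φ (x-h)))) = C / D := by
    rw [hC, hD, ← Real.exp_sub]; congr 1; ring
  have e4 : Real.exp (s * (φ (x-h) - φ (x-2*h))) = F / D := by
    rw [hF, hD, ← Real.exp_sub]; congr 1; ring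
  rw [gg_exp, gg_exp, gg_exp, gg_exp, e1, e2, e3, e4, hrB, hrD]
  field_simp
  ring

set_option maxHeartbeats 2000000 in
/-- `A_h D_h(r² D_h²ρ · A_h D_h ρ)
  = −3s³μ⁴ e^{3μψ} (ψ')⁴ + s³ e^{3μψ} O(μ³) + O_μ(s²) + s³ O_μ((sh)²)`,
with the `O(μ³)` constant independent of `μ`, uniformly in `λ, h, T, δ, t, x`
under the condition `λh ≤ δT²`. -/
theorem carleman_coeff_AhDh_r2Dh2rho_AhDhrho (ψ : ℝ → ℝ) (hψ : ContDiff ℝ (⊤ : ℕ∞) ψ)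
    (hbd : ∀ k : ℕ, ∃ M : ℝ, ∀ x : ℝ, |iteratedDeriv k ψ x| ≤ M)
    (K : ℝ) (hK : ∀ x : ℝ, |ψ x| ≤ K) :
    ∃ C : ℝ, 0 < C ∧ ∀ μ : ℝ, 1 ≤ μ → ∃ Cμ : ℝ, 0 < Cμ ∧
      ∀ T δ lam h : ℝ, 0 < T → δ ∈ Set.Ioo (0 : ℝ) (1 / 2) →
        1 ≤ lam → 0 < h → lam * h ≤ δ * T ^ 2 →
        ∀ t ∈ Set.Icc (0 : ℝ) T, ∀ x : ℝ,
          |Ah h (Dh h (fun y =>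
              rW lam T δ μ K ψ t y ^ 2 * Dh h (Dh h (rhoW lam T δ μ K ψ t)) y *
                Ah h (Dh h (rhoW lam T δ μ K ψ t)) y)) x
              + 3 * sF lam T δ t ^ 3 * μ ^ 4 * Real.exp (3 * μ * ψ x) * deriv ψ x ^ 4|
            ≤ C * μ ^ 3 * sF lam T δ t ^ 3 * Real.exp (3 * μ * ψ x)
              + Cμ * sF lam T δ t ^ 2
              + Cμ * sF lam T δ t ^ 3 * (sF lam T δ t * h) ^ 2 := by
    -- derivative bounds of ψ
  obtain ⟨M1, hM1'⟩ := hbd 1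
  obtain ⟨M2, hM2'⟩ := hbd 2
  obtain ⟨M3, hM3'⟩ := hbd 3
  have hM1 : ∀ y, |deriv ψ y| ≤ M1 := by
    intro y; have := hM1' y; rwa [iteratedDeriv_one] at this
  have hM2 : ∀ y, |deriv (deriv ψ) y| ≤ M2 := by
    intro y; have := hM2' y
    rwa [iteratedDeriv_succ, iteratedDeriv_one] at this
  have hM3 : ∀ y, |deriv (deriv (deriv ψ)) y| ≤ M3 := by
    intro y; have := hM3' y
    rwa [iteratedDeriv_succ, iteratedDeriv_succ, iteratedDeriv_one] at this
  have hM10 : 0 ≤ M1 := (abs_nonneg _).trans (hM1 0)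
  have hM20 : 0 ≤ M2 := (abs_nonneg _).trans (hM2 0)
  have hM30 : 0 ≤ M3 := (abs_nonneg _).trans (hM3 0)
  -- smoothness chain
  have hpsiInf : ContDiff ℝ (∞ : WithTop ℕ∞) ψ := hψ.of_le (by simp)
  have hone : (1 : WithTop ℕ∞) ≤ ∞ := by exact_mod_cast le_top
  have hc1 : ContDiff ℝ (∞ : WithTop ℕ∞) (deriv ψ) := (contDiff_infty_iff_deriv.mp hpsiInf).2
  have hc2 : ContDiff ℝ (∞ : WithTop ℕ∞) (deriv (deriv ψ)) :=
    (contDiff_infty_iff_deriv.mp hc1).2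
  have hdψ : ∀ y, HasDerivAt ψ (deriv ψ y) y :=
    fun y => (hpsiInf.differentiable (by simp) y).hasDerivAt
  have hdψ1 : ∀ y, HasDerivAt (deriv ψ) (deriv (deriv ψ) y) y :=
    fun y => (hc1.differentiable (by simp) y).hasDerivAt
  have hdψ2 : ∀ y, HasDerivAt (deriv (deriv ψ)) (deriv (deriv (deriv ψ)) y) y :=
    fun y => (hc2.differentiable (by simp) y).hasDerivAt
  refine ⟨3 * M1^2 * M2 + 1, by positivity, ?_⟩
  intro μ hμ
  have hμ0 : 0 < μ := lt_of_lt_of_le one_pos hμ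
  -- derivatives of the weight
  set ψ1 := deriv ψ with hψ1
  set ψ2 := deriv (deriv ψ) with hψ2
  set ψ3 := deriv (deriv (deriv ψ)) with hψ3
  set φ' : ℝ → ℝ := fun y => μ * ψ1 y * Real.exp (μ * ψ y) with hφ'
  set φ'' : ℝ → ℝ := fun y => (μ * ψ2 y + μ^2 * (ψ1 y)^2) * Real.exp (μ * ψ y) with hφ''
  set φ''' : ℝ → ℝ :=
    fun y => (μ * ψ3 y + 3*μ^2 * ψ1 y * ψ2 y + μ^3 * (ψ1 y)^3) * Real.exp (μ * ψ y) with hφ'''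
  have hexp : ∀ y, HasDerivAt (fun z => Real.exp (μ * ψ z))
      (Real.exp (μ * ψ y) * (μ * ψ1 y)) y := by
    intro y
    have := (Real.hasDerivAt_exp (μ * ψ y)).comp y ((hdψ y).const_mul μ)
    simpa [mul_comm, Function.comp_def] using this
  have hdφ : ∀ y, HasDerivAt (phiW μ K ψ) (φ' y) y := by
    intro y
    have := (hexp y).sub_const (Real.exp (2*μ*K))
    have h2 : HasDerivAt (phiW μ K ψ) (Real.exp (μ * ψ y) * (μ * ψ1 y)) y := this
    refine hda_convert h2 rfl ?_
    rw [hφ']; ring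
  have hdφ' : ∀ y, HasDerivAt φ' (φ'' y) y := by
    intro y
    have := ((hdψ1 y).const_mul μ).mul (hexp y)
    have h2 : HasDerivAt (fun z => (μ * ψ1 z) * Real.exp (μ * ψ z))
        (μ * ψ2 y * Real.exp (μ * ψ y) + (μ * ψ1 y) * (Real.exp (μ * ψ y) * (μ * ψ1 y))) y := this
    have h3 : φ' = fun z => (μ * ψ1 z) * Real.exp (μ * ψ z) := by
      funext z; rw [hφ']
    rw [h3]
    refine hda_convert h2 rfl ?_
    rw [hφ'']; ring
  have hdφ'' : ∀ y, HasDerivAt φ'' (φ''' y) y := by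
    intro y
    have hpoly : HasDerivAt (fun z => μ * ψ2 z + μ^2 * (ψ1 z)^2)
        (μ * ψ3 y + μ^2 * (2 * ψ1 y * ψ2 y)) y := by
      have p1 := (hdψ2 y).const_mul μ
      have p2 := ((hdψ1 y).pow 2).const_mul (μ^2)
      have := p1.add p2
      refine hda_convert this rfl ?_
      ring
    have := hpoly.mul (hexp y)
    refine hda_convert this rfl ?_
    rw [hφ''']; ring
  -- bounds
  have hexpK : ∀ y, Real.exp (μ * ψ y) ≤ Real.exp (μ * K) := by
    intro y
    apply Real.exp_le_exp.2
    have := (abs_le.1 (hK y)).2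
    nlinarith
  have hexppos : ∀ y, (0:ℝ) < Real.exp (μ * ψ y) := fun y => Real.exp_pos _
  set B₁ := μ * M1 * Real.exp (μ * K) with hB₁
  set B₂ := (μ * M2 + μ^2 * M1^2) * Real.exp (μ * K) with hB₂
  set B₃ := (μ * M3 + 3*μ^2*M1*M2 + μ^3*M1^3) * Real.exp (μ * K) with hB₃
  have hB1b : ∀ y, |φ' y| ≤ B₁ := by
    intro y
    rw [hφ']; simp only
    rw [abs_mul, abs_mul, abs_of_pos hμ0, abs_of_pos (hexppos y), hB₁]
    have h1 : μ * |ψ1 y| ≤ μ * M1 := mul_le_mul_of_nonneg_left (hM1 y) (le_of_lt hμ0)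
    exact mul_le_mul h1 (hexpK y) (le_of_lt (hexppos y)) (by positivity)
  have hB2b : ∀ y, |φ'' y| ≤ B₂ := by
    intro y
    rw [hφ'']; simp only
    rw [abs_mul, abs_of_pos (hexppos y), hB₂]
    have h1 : |μ * ψ2 y + μ^2 * (ψ1 y)^2| ≤ μ * M2 + μ^2 * M1^2 := by
      refine (abs_add_le _ _).trans ?_
      rw [abs_mul, abs_mul, abs_of_pos hμ0, abs_of_pos (by positivity : (0:ℝ) < μ^2), abs_pow]
      have q1 : |ψ1 y|^2 ≤ M1^2 := pow_le_pow_left₀ (abs_nonneg _) (hM1 y) 2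
      have q2 : μ * |ψ2 y| ≤ μ * M2 := mul_le_mul_of_nonneg_left (hM2 y) (le_of_lt hμ0)
      nlinarith [sq_nonneg μ]
    exact mul_le_mul h1 (hexpK y) (le_of_lt (hexppos y)) (by positivity)
  have hB3b : ∀ y, |φ''' y| ≤ B₃ := by
    intro y
    rw [hφ''']; simp only
    rw [abs_mul, abs_of_pos (hexppos y), hB₃]
    have h1 : |μ * ψ3 y + 3*μ^2 * ψ1 y * ψ2 y + μ^3 * (ψ1 y)^3|
        ≤ μ * M3 + 3*μ^2*M1*M2 + μ^3*M1^3 := by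
      have t1 : |μ * ψ3 y| ≤ μ * M3 := by
        rw [abs_mul, abs_of_pos hμ0]
        exact mul_le_mul_of_nonneg_left (hM3 y) (le_of_lt hμ0)
      have t2 : |3*μ^2 * ψ1 y * ψ2 y| ≤ 3*μ^2*M1*M2 := by
        rw [abs_mul, abs_mul, abs_of_pos (by positivity : (0:ℝ) < 3*μ^2)]
        have : |ψ1 y| * |ψ2 y| ≤ M1 * M2 :=
          mul_le_mul (hM1 y) (hM2 y) (abs_nonneg _) hM10
        calc 3*μ^2 * |ψ1 y| * |ψ2 y| = 3*μ^2 * (|ψ1 y| * |ψ2 y|) := by ring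
        _ ≤ 3*μ^2 * (M1*M2) := mul_le_mul_of_nonneg_left this (by positivity)
        _ = 3*μ^2*M1*M2 := by ring
      have t3 : |μ^3 * (ψ1 y)^3| ≤ μ^3 * M1^3 := by
        rw [abs_mul, abs_of_pos (by positivity : (0:ℝ) < μ^3), abs_pow]
        exact mul_le_mul_of_nonneg_left
          (pow_le_pow_left₀ (abs_nonneg _) (hM1 y) 3) (by positivity)
      calc |μ * ψ3 y + 3*μ^2 * ψ1 y * ψ2 y + μ^3 * (ψ1 y)^3|
          ≤ |μ * ψ3 y + 3*μ^2 * ψ1 y * ψ2 y| + |μ^3 * (ψ1 y)^3| := abs_add_le _ _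
      _ ≤ |μ * ψ3 y| + |3*μ^2 * ψ1 y * ψ2 y| + |μ^3 * (ψ1 y)^3| := by
          linarith [abs_add_le (μ * ψ3 y) (3*μ^2 * ψ1 y * ψ2 y)]
      _ ≤ μ * M3 + 3*μ^2*M1*M2 + μ^3*M1^3 := by linarith
    exact mul_le_mul h1 (hexpK y) (le_of_lt (hexppos y)) (by positivity)
  have hB10 : 0 ≤ B₁ := (abs_nonneg _).trans (hB1b 0)
  have hB20 : 0 ≤ B₂ := (abs_nonneg _).trans (hB2b 0)
  have hB30 : 0 ≤ B₃ := (abs_nonneg _).trans (hB3b 0)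
  set D := 34 * Real.exp (2*B₁) * B₁^4 * B₂ + 3 * Real.exp (2*B₁) * (B₂^2 + B₁*B₃)
      + 9 * B₁ * (B₁*B₃ + B₂^2) with hD
  have hD0 : 0 ≤ D := by
    rw [hD]
    have e0 : (0:ℝ) < Real.exp (2*B₁) := Real.exp_pos _
    positivity
  refine ⟨D + 1, by linarith, ?_⟩
  intro T δ lam h hT hδ hlam hh hlh t ht x
  obtain ⟨hδ0, hδhalf⟩ := hδ
  obtain ⟨ht0, htT⟩ := ht
  -- s and its properties
  set s := sF lam T δ t with hsdef
  have hδT : (0:ℝ) < δ * T := mul_pos hδ0 hT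
  have hPpos : (0:ℝ) < (t + δ * T) * (T + δ * T - t) := by
    apply mul_pos
    · linarith
    · linarith
  have hPge : δ * T^2 ≤ (t + δ * T) * (T + δ * T - t) := by
    have hid : (t + δ * T) * (T + δ * T - t) = t*(T-t) + δ*T^2 + δ^2*T^2 := by ring
    have h1 : 0 ≤ t*(T-t) := mul_nonneg ht0 (by linarith)
    have h2 : (0:ℝ) ≤ δ^2*T^2 := by positivity
    linarith
  have hs : 0 < s := by
    rw [hsdef]; unfold sF theta
    apply mul_pos (lt_of_lt_of_le one_pos hlam)
    positivity
  have hsh : s * h ≤ 1 := by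
    have hseq : s * h = (lam * h) / ((t + δ * T) * (T + δ * T - t)) := by
      rw [hsdef]; unfold sF theta; field_simp
    rw [hseq, div_le_one hPpos]
    calc lam * h ≤ δ * T^2 := hlh
    _ ≤ (t + δ * T) * (T + δ * T - t) := hPge
  -- rewrite the operator
  have hρ : rhoW lam T δ μ K ψ t = fun z => Real.exp (-(s * phiW μ K ψ z)) := by
    funext z; unfold rhoW; rw [← hsdef, neg_mul]
  have hfun : (fun y => rW lam T δ μ K ψ t y ^ 2 * Dh h (Dh h (rhoW lam T δ μ K ψ t)) y *
        Ah h (Dh h (rhoW lam T δ μ K ψ t)) y)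
      = (fun y => Real.exp (s * phiW μ K ψ y) ^ 2
          * Dh h (Dh h (fun z => Real.exp (-(s * phiW μ K ψ z)))) y
          * Ah h (Dh h (fun z => Real.exp (-(s * phiW μ K ψ z)))) y) := by
    rw [hρ]
    funext y
    unfold rW
    rw [← hsdef]
  have hop := op_identity s (phiW μ K ψ) h x (ne_of_gt hh)
  -- core estimate
  have hcore := core (phiW μ K ψ) φ' φ'' φ''' hdφ hdφ' hdφ'' B₁ B₂ B₃ hB1b hB2b hB3b
    s h hs hh hsh x
  -- identification of the main term
  have hexp3 : Real.exp (3*μ*ψ x) = Real.exp (μ * ψ x)^3 := by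
    rw [show (3:ℝ)*μ*ψ x = μ*ψ x + μ*ψ x + μ*ψ x by ring, Real.exp_add, Real.exp_add]
    ring
  have hph : φ' x ^ 2 * φ'' x
      = Real.exp (3*μ*ψ x) * (μ^4 * ψ1 x^4 + μ^3 * (ψ1 x^2 * ψ2 x)) := by
    rw [hφ', hφ'']; simp only
    rw [hexp3]; ring
  -- final assembly
  rw [hfun, hop]
  set N := (gg (-(s * (phiW μ K ψ (x+2*h) - phiW μ K ψ (x+h))))
      - gg (s * (phiW μ K ψ (x+h) - phiW μ K ψ x))
      - gg (-(s * (phiW μ K ψ x - phiW μ K ψ (x-h))))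
      + gg (s * (phiW μ K ψ (x-h) - phiW μ K ψ (x-2*h)))) with hN
  have hsplit : N/(4*h^4) + 3 * s^3 * μ^4 * Real.exp (3*μ*ψ x) * deriv ψ x^4
      = (N/(4*h^4) + 3 * s^3 * φ' x ^ 2 * φ'' x)
        - 3 * s^3 * μ^3 * Real.exp (3*μ*ψ x) * (ψ1 x^2 * ψ2 x) := by
    linear_combination (3*s^3) * hph + (6*s^3*μ^4*ψ1 x^4 + 6*s^3*μ^3*ψ1 x^2*ψ2 x) * hexp3
  rw [hsplit]
  have hsecond : |3 * s^3 * μ^3 * Real.exp (3*μ*ψ x) * (ψ1 x^2 * ψ2 x)|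
      ≤ 3 * M1^2 * M2 * (μ^3 * s^3 * Real.exp (3*μ*ψ x)) := by
    have hcoef : (0:ℝ) < 3 * s^3 * μ^3 * Real.exp (3*μ*ψ x) := by positivity
    rw [abs_mul, abs_of_pos hcoef]
    have h1 : |ψ1 x^2 * ψ2 x| ≤ M1^2 * M2 := by
      rw [abs_mul, abs_pow]
      have q1 : |ψ1 x|^2 ≤ M1^2 := pow_le_pow_left₀ (abs_nonneg _) (hM1 x) 2
      exact mul_le_mul q1 (hM2 x) (abs_nonneg _) (by positivity)
    calc 3 * s^3 * μ^3 * Real.exp (3*μ*ψ x) * |ψ1 x^2 * ψ2 x|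
        ≤ 3 * s^3 * μ^3 * Real.exp (3*μ*ψ x) * (M1^2 * M2) :=
        mul_le_mul_of_nonneg_left h1 (le_of_lt hcoef)
    _ = 3 * M1^2 * M2 * (μ^3 * s^3 * Real.exp (3*μ*ψ x)) := by ring
  have tri : |(N/(4*h^4) + 3 * s^3 * φ' x ^ 2 * φ'' x)
        - 3 * s^3 * μ^3 * Real.exp (3*μ*ψ x) * (ψ1 x^2 * ψ2 x)|
      ≤ |N/(4*h^4) + 3 * s^3 * φ' x ^ 2 * φ'' x|
        + |3 * s^3 * μ^3 * Real.exp (3*μ*ψ x) * (ψ1 x^2 * ψ2 x)| := abs_sub _ _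
  refine tri.trans ?_
  have hfin1 : |N/(4*h^4) + 3 * s^3 * φ' x ^ 2 * φ'' x| ≤ D * (s^2 + s^3*(s*h)^2) := hcore
  have hmu3 : 0 ≤ μ^3 * s^3 * Real.exp (3*μ*ψ x) := by positivity
  have hs2 : 0 ≤ s^2 := sq_nonneg s
  have hX : 0 ≤ s^3 * (s*h)^2 := by positivity
  calc |N/(4*h^4) + 3 * s^3 * φ' x ^ 2 * φ'' x|
        + |3 * s^3 * μ^3 * Real.exp (3*μ*ψ x) * (ψ1 x^2 * ψ2 x)|
      ≤ D * (s^2 + s^3*(s*h)^2) + 3 * M1^2 * M2 * (μ^3 * s^3 * Real.exp (3*μ*ψ x)) := by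
        linarith [hfin1, hsecond]
  _ ≤ (3 * M1^2 * M2 + 1) * μ^3 * s^3 * Real.exp (3*μ*ψ x) + (D+1) * s^2
        + (D+1) * (s^3 * (s*h)^2) := by linarith [hmu3, hs2, hX]
  _ = (3 * M1^2 * M2 + 1) * μ^3 * s^3 * Real.exp (3*μ*ψ x) + (D+1) * s^2
        + (D+1) * s^3 * (s*h)^2 := by ring
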